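/- Let g be a Lorentzian metric, u a unit timelike vector field, F > 0 smooth, C = Fu, Ω_{αβ} = ∂_αC_β - ∂_βC_α, and π^α_β = δ^α_β - u^αu_β. Then u^α∇_α u_β = π^α_β (∂_αF)/F + F^{-1} u^α Ω_{αβ}. -/

import Mathlib

noncomputable section

/-- Points of the coordinate chart ℝ⁴. -/
abbrev Pt := Fin 4 → ℝ

/-- Partial derivative ∂ᵢf at x. -/
def pd (i : Fin 4) (f : Pt → ℝ) (x : Pt) : ℝ := fderiv ℝ f x (Pi.single i 1)

/-- Christoffel symbols Γ^l_{ab} of the metric `g` with inverse `ginv`. -/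
def Christoffel (g ginv : Pt → Fin 4 → Fin 4 → ℝ) (l a b : Fin 4) (x : Pt) : ℝ :=
  (1/2) * ∑ r : Fin 4, ginv x l r *
    (pd a (fun y => g y r b) x + pd b (fun y => g y r a) x - pd r (fun y => g y a b) x)

/-- Covariant derivative of a one-form: ∇_a v_b. -/
def covOne (g ginv : Pt → Fin 4 → Fin 4 → ℝ) (v : Pt → Fin 4 → ℝ) (a b : Fin 4) (x : Pt) : ℝ :=
  pd a (fun y => v y b) x - ∑ l : Fin 4, Christoffel g ginv l a b x * v x l

/-- Covariant derivative of a vector field: ∇_a v^b. -/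
def covVec (g ginv : Pt → Fin 4 → Fin 4 → ℝ) (v : Pt → Fin 4 → ℝ) (a b : Fin 4) (x : Pt) : ℝ :=
  pd a (fun y => v y b) x + ∑ l : Fin 4, Christoffel g ginv b a l x * v x l

/-- The metric `g` together with `ginv` is a smooth symmetric metric with inverse `ginv`. -/
structure IsMetric (g ginv : Pt → Fin 4 → Fin 4 → ℝ) : Prop where
  symm : ∀ x a b, g x a b = g x b a
  inv : ∀ x a b, (∑ c : Fin 4, g x a c * ginv x c b) = if a = b then (1:ℝ) else 0
  smooth : ∀ a b, ContDiff ℝ (⊤ : ℕ∞) (fun x => g x a b)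
  smooth_inv : ∀ a b, ContDiff ℝ (⊤ : ℕ∞) (fun x => ginv x a b)

end
noncomputable section

lemma pd_const (i : Fin 4) (c : ℝ) (x : Pt) : pd i (fun _ => c) x = 0 := by
  simp [pd]

lemma pd_mul (f h : Pt → ℝ) (x : Pt) (i : Fin 4)
    (hf : DifferentiableAt ℝ f x) (hh : DifferentiableAt ℝ h x) :
    pd i (fun y => f y * h y) x = pd i f x * h x + f x * pd i h x := by
  unfold pd
  rw [fderiv_fun_mul hf hh]
  simp [mul_comm]
  ring

lemma pd_sum (f : Fin 4 → Pt → ℝ) (x : Pt) (i : Fin 4)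
    (hf : ∀ j, DifferentiableAt ℝ (f j) x) :
    pd i (fun y => ∑ j : Fin 4, f j y) x = ∑ j : Fin 4, pd i (f j) x := by
  unfold pd
  rw [fderiv_fun_sum (fun j _ => hf j)]
  simp

lemma sumcongr2 (f h : Fin 4 → Fin 4 → ℝ) (hfh : ∀ a b, f a b = h a b) :
    ∑ a : Fin 4, ∑ b : Fin 4, f a b = ∑ a : Fin 4, ∑ b : Fin 4, h a b :=
  Finset.sum_congr rfl fun a _ => Finset.sum_congr rfl fun b _ => hfh a b

lemma sum_split4 (f1 f2 f3 f4 : Fin 4 → ℝ) :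
    ∑ α : Fin 4, (f1 α + f2 α - f3 α - f4 α)
      = (∑ α : Fin 4, f1 α) + (∑ α : Fin 4, f2 α) - (∑ α : Fin 4, f3 α)
        - ∑ α : Fin 4, f4 α := by
  rw [Finset.sum_sub_distrib, Finset.sum_sub_distrib, Finset.sum_add_distrib]

lemma sum2_split (f1 f2 f3 : Fin 4 → Fin 4 → ℝ) :
    ∑ a : Fin 4, ∑ b : Fin 4, ((1/2:ℝ) * f1 a b + (1/2) * f2 a b - (1/2) * f3 a b)
      = (1/2) * (∑ a : Fin 4, ∑ b : Fin 4, f1 a b)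
        + (1/2) * (∑ a : Fin 4, ∑ b : Fin 4, f2 a b)
        - (1/2) * ∑ a : Fin 4, ∑ b : Fin 4, f3 a b := by
  simp [Finset.sum_add_distrib, Finset.sum_sub_distrib, Finset.mul_sum]


/-- Claim 4: u^α∇_αu_β = π^α_β (∂_αF)/F + F⁻¹u^αΩ_{αβ}, with
π^α_β = δ^α_β - u^αu_β and Ω_{αβ} = ∂_αC_β - ∂_βC_α, C = Fu. -/
theorem claim_four_acceleration
    (g ginv : Pt → Fin 4 → Fin 4 → ℝ) (hmet : IsMetric g ginv)
    (u : Pt → Fin 4 → ℝ) (hu : ∀ a, ContDiff ℝ (⊤ : ℕ∞) (fun x => u x a))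
    (hnorm : ∀ x, (∑ a : Fin 4, ∑ b : Fin 4, g x a b * u x a * u x b) = 1)
    (F : Pt → ℝ) (hFpos : ∀ x, 0 < F x) (hF : ContDiff ℝ (⊤ : ℕ∞) F)
    (ul C : Pt → Fin 4 → ℝ)
    (hul : ∀ x a, ul x a = ∑ μ : Fin 4, g x a μ * u x μ)
    (hCdef : ∀ x a, C x a = F x * ul x a)
    (Ω : Pt → Fin 4 → Fin 4 → ℝ)
    (hΩ : ∀ x a b, Ω x a b = pd a (fun y => C y b) x - pd b (fun y => C y a) x) :
    ∀ x (β : Fin 4),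
      (∑ α : Fin 4, u x α * covOne g ginv ul α β x)
        = (∑ α : Fin 4, ((if α = β then (1:ℝ) else 0) - u x α * ul x β) * pd α F x / F x)
          + (F x)⁻¹ * ∑ α : Fin 4, u x α * Ω x α β := by
  intro x β
  have hsymm := hmet.symm
  have hinv := hmet.inv
  have hgd : ∀ a b, DifferentiableAt ℝ (fun y => g y a b) x :=
    fun a b => ((hmet.smooth a b).differentiable (by simp)).differentiableAt
  have hud : ∀ a, DifferentiableAt ℝ (fun y => u y a) x :=
    fun a => ((hu a).differentiable (by simp)).differentiableAt
  have hFd : DifferentiableAt ℝ F x := (hF.differentiable (by simp)).differentiableAt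
  have hulfun : ∀ b, (fun y => ul y b) = fun y => ∑ μ : Fin 4, g y b μ * u y μ :=
    fun b => funext fun y => hul y b
  have huld : ∀ b, DifferentiableAt ℝ (fun y => ul y b) x := by
    intro b
    rw [hulfun b]
    exact DifferentiableAt.fun_sum fun μ _ => (hgd b μ).mul (hud μ)
  -- L1 : inverse-metric contraction
  have hL1 : ∀ r, ∑ l : Fin 4, ul x l * ginv x l r = u x r := by
    intro r
    calc ∑ l : Fin 4, ul x l * ginv x l r
        = ∑ l : Fin 4, ∑ μ : Fin 4, u x μ * (g x μ l * ginv x l r) := by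
          refine Finset.sum_congr rfl fun l _ => ?_
          rw [hul, Finset.sum_mul]
          refine Finset.sum_congr rfl fun μ _ => ?_
          rw [hsymm x l μ]; ring
      _ = ∑ μ : Fin 4, u x μ * ∑ l : Fin 4, g x μ l * ginv x l r := by
          rw [Finset.sum_comm]
          exact Finset.sum_congr rfl fun μ _ => (Finset.mul_sum _ _ _).symm
      _ = u x r := by
          simp only [hinv]
          simp
  -- L2 : normalization
  have hL2 : ∑ α : Fin 4, u x α * ul x α = 1 := by
    calc ∑ α : Fin 4, u x α * ul x α
        = ∑ α : Fin 4, ∑ μ : Fin 4, g x α μ * u x α * u x μ := by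
          refine Finset.sum_congr rfl fun α _ => ?_
          rw [hul, Finset.mul_sum]
          exact Finset.sum_congr rfl fun μ _ => by ring
      _ = 1 := hnorm x
  -- expansion of pd of ul
  have hpdul : ∀ i b, pd i (fun y => ul y b) x
      = ∑ μ : Fin 4, (pd i (fun y => g y b μ) x * u x μ + g x b μ * pd i (fun y => u y μ) x) := by
    intro i b
    rw [hulfun b, pd_sum _ _ _ (fun μ => (hgd b μ).fun_mul (hud μ))]
    exact Finset.sum_congr rfl fun μ _ => pd_mul _ _ _ _ (hgd b μ) (hud μ)
  -- expansion of pd of C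
  have hpdC : ∀ i b, pd i (fun y => C y b) x
      = pd i F x * ul x b + F x * pd i (fun y => ul y b) x := by
    intro i b
    have : (fun y => C y b) = fun y => F y * ul y b := funext fun y => hCdef y b
    rw [this]
    exact pd_mul _ _ _ _ hFd (huld b)
  -- derivative of the normalization
  have hDnorm : ∑ a : Fin 4, ∑ b : Fin 4,
      ((pd β (fun y => g y a b) x * u x a + g x a b * pd β (fun y => u y a) x) * u x b
        + g x a b * u x a * pd β (fun y => u y b) x) = 0 := by
    have h0 : pd β (fun y => ∑ a : Fin 4, ∑ b : Fin 4, g y a b * u y a * u y b) x = 0 := by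
      have he : (fun y => ∑ a : Fin 4, ∑ b : Fin 4, g y a b * u y a * u y b)
          = fun _ => (1:ℝ) := funext fun y => hnorm y
      rw [he, pd_const]
    rw [pd_sum _ _ _ (fun a => DifferentiableAt.fun_sum fun b _ =>
      ((hgd a b).fun_mul (hud a)).fun_mul (hud b))] at h0
    rw [← h0]
    refine Finset.sum_congr rfl fun a _ => ?_
    rw [pd_sum _ _ _ (fun b => ((hgd a b).fun_mul (hud a)).fun_mul (hud b))]
    refine Finset.sum_congr rfl fun b _ => ?_
    rw [pd_mul _ _ _ _ ((hgd a b).fun_mul (hud a)) (hud b),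
        pd_mul _ _ _ _ (hgd a b) (hud a)]
  -- the key quantity S and the transversal derivative T
  set S : ℝ := ∑ a : Fin 4, ∑ b : Fin 4, u x a * u x b * pd β (fun y => g y a b) x with hS
  have hT : ∑ α : Fin 4, u x α * pd β (fun y => ul y α) x = (1/2) * S := by
    have hexp : ∑ α : Fin 4, u x α * pd β (fun y => ul y α) x
        = (∑ a : Fin 4, ∑ b : Fin 4, u x a * u x b * pd β (fun y => g y a b) x)
          + ∑ a : Fin 4, ∑ b : Fin 4, g x a b * u x a * pd β (fun y => u y b) x := by
      rw [← Finset.sum_add_distrib]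
      refine Finset.sum_congr rfl fun a _ => ?_
      rw [hpdul β a, Finset.mul_sum, ← Finset.sum_add_distrib]
      refine Finset.sum_congr rfl fun b _ => ?_
      ring
    have hPQ : ∑ a : Fin 4, ∑ b : Fin 4, g x a b * pd β (fun y => u y a) x * u x b
        = ∑ a : Fin 4, ∑ b : Fin 4, g x a b * u x a * pd β (fun y => u y b) x := by
      rw [Finset.sum_comm]
      refine sumcongr2 _ _ fun a b => ?_
      rw [hsymm x b a]; ring
    have hsplit : ∑ a : Fin 4, ∑ b : Fin 4,
        ((pd β (fun y => g y a b) x * u x a + g x a b * pd β (fun y => u y a) x) * u x b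
          + g x a b * u x a * pd β (fun y => u y b) x)
        = (∑ a : Fin 4, ∑ b : Fin 4, u x a * u x b * pd β (fun y => g y a b) x)
          + (∑ a : Fin 4, ∑ b : Fin 4, g x a b * pd β (fun y => u y a) x * u x b)
          + ∑ a : Fin 4, ∑ b : Fin 4, g x a b * u x a * pd β (fun y => u y b) x := by
      rw [← Finset.sum_add_distrib, ← Finset.sum_add_distrib]
      refine Finset.sum_congr rfl fun a _ => ?_
      rw [← Finset.sum_add_distrib, ← Finset.sum_add_distrib]
      refine Finset.sum_congr rfl fun b _ => ?_
      ring
    rw [hsplit] at hDnorm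
    rw [hexp, ← hS]
    rw [hPQ] at hDnorm
    rw [← hS] at hDnorm
    linarith
  -- Christoffel contraction equals (1/2) S
  have hChr : ∑ α : Fin 4, u x α * ∑ l : Fin 4, Christoffel g ginv l α β x * ul x l
      = (1/2) * S := by
    have h1 : ∀ α, ∑ l : Fin 4, Christoffel g ginv l α β x * ul x l
        = (1/2) * ∑ r : Fin 4, u x r *
            (pd α (fun y => g y r β) x + pd β (fun y => g y r α) x
              - pd r (fun y => g y α β) x) := by
      intro α
      unfold Christoffel
      calc ∑ l : Fin 4, ((1/2) * ∑ r : Fin 4, ginv x l r *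
              (pd α (fun y => g y r β) x + pd β (fun y => g y r α) x
                - pd r (fun y => g y α β) x)) * ul x l
          = ∑ l : Fin 4, ∑ r : Fin 4, (1/2) * ((ul x l * ginv x l r) *
              (pd α (fun y => g y r β) x + pd β (fun y => g y r α) x
                - pd r (fun y => g y α β) x)) := by
            refine Finset.sum_congr rfl fun l _ => ?_
            rw [Finset.mul_sum, Finset.sum_mul]
            exact Finset.sum_congr rfl fun r _ => by ring
        _ = ∑ r : Fin 4, ∑ l : Fin 4, (1/2) * ((ul x l * ginv x l r) *
              (pd α (fun y => g y r β) x + pd β (fun y => g y r α) x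
                - pd r (fun y => g y α β) x)) := Finset.sum_comm
        _ = (1/2) * ∑ r : Fin 4, u x r *
              (pd α (fun y => g y r β) x + pd β (fun y => g y r α) x
                - pd r (fun y => g y α β) x) := by
            rw [Finset.mul_sum]
            refine Finset.sum_congr rfl fun r _ => ?_
            rw [← hL1 r, Finset.sum_mul, Finset.mul_sum]
    have hcancel : ∑ α : Fin 4, ∑ r : Fin 4,
          u x α * u x r * pd α (fun y => g y r β) x
        = ∑ α : Fin 4, ∑ r : Fin 4, u x α * u x r * pd r (fun y => g y α β) x := by
      rw [Finset.sum_comm]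
      exact sumcongr2 _ _ fun a b => by ring
    have hSmatch : ∑ α : Fin 4, ∑ r : Fin 4,
          u x α * u x r * pd β (fun y => g y r α) x = S := by
      rw [hS, Finset.sum_comm]
      exact sumcongr2 _ _ fun a b => by ring
    calc ∑ α : Fin 4, u x α * ∑ l : Fin 4, Christoffel g ginv l α β x * ul x l
        = ∑ α : Fin 4, ∑ r : Fin 4, ((1/2) * (u x α * u x r * pd α (fun y => g y r β) x)
            + (1/2) * (u x α * u x r * pd β (fun y => g y r α) x)
            - (1/2) * (u x α * u x r * pd r (fun y => g y α β) x)) := by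
          refine Finset.sum_congr rfl fun α _ => ?_
          rw [h1 α, Finset.mul_sum, Finset.mul_sum]
          exact Finset.sum_congr rfl fun r _ => by ring
      _ = (1/2) * (∑ α : Fin 4, ∑ r : Fin 4, u x α * u x r * pd α (fun y => g y r β) x)
            + (1/2) * (∑ α : Fin 4, ∑ r : Fin 4, u x α * u x r * pd β (fun y => g y r α) x)
            - (1/2) * ∑ α : Fin 4, ∑ r : Fin 4, u x α * u x r * pd r (fun y => g y α β) x :=
          sum2_split _ _ _
      _ = (1/2) * S := by rw [hcancel, hSmatch]; ring
  -- abbreviations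
  set A : ℝ := ∑ α : Fin 4, u x α * pd α (fun y => ul y β) x with hA
  set T : ℝ := ∑ α : Fin 4, u x α * pd β (fun y => ul y α) x with hTdef
  set D : ℝ := ∑ α : Fin 4, u x α * pd α F x with hD
  -- LHS
  have hLHS : ∑ α : Fin 4, u x α * covOne g ginv ul α β x = A - T := by
    have : ∑ α : Fin 4, u x α * covOne g ginv ul α β x
        = (∑ α : Fin 4, u x α * pd α (fun y => ul y β) x)
          - ∑ α : Fin 4, u x α * ∑ l : Fin 4, Christoffel g ginv l α β x * ul x l := by
      rw [← Finset.sum_sub_distrib]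
      refine Finset.sum_congr rfl fun α _ => ?_
      unfold covOne
      ring
    rw [this, hChr, ← hA, ← hT]
  -- Omega sum
  have hΩsum : ∑ α : Fin 4, u x α * Ω x α β
      = D * ul x β + F x * A - pd β F x - F x * T := by
    have hstep : ∑ α : Fin 4, u x α * Ω x α β
        = ∑ α : Fin 4, ((u x α * pd α F x) * ul x β
            + F x * (u x α * pd α (fun y => ul y β) x)
            - pd β F x * (u x α * ul x α)
            - F x * (u x α * pd β (fun y => ul y α) x)) := by
      refine Finset.sum_congr rfl fun α _ => ?_
      rw [hΩ x α β, hpdC α β, hpdC β α]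
      ring
    rw [hstep, sum_split4]
    rw [← Finset.sum_mul, ← Finset.mul_sum, ← Finset.mul_sum, ← Finset.mul_sum, hL2]
    rw [← hD, ← hA, ← hTdef]
    ring
  -- first term on the RHS
  have hfirst : ∑ α : Fin 4, ((if α = β then (1:ℝ) else 0) - u x α * ul x β) * pd α F x / F x
      = pd β F x / F x - ul x β * D / F x := by
    have hper : ∀ α : Fin 4, ((if α = β then (1:ℝ) else 0) - u x α * ul x β) * pd α F x / F x
        = (if α = β then pd α F x / F x else 0) - ul x β * (u x α * pd α F x) / F x := by
      intro α
      split <;> ring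
    rw [Finset.sum_congr rfl fun α _ => hper α, Finset.sum_sub_distrib]
    congr 1
    · simp
    · rw [← Finset.sum_div, ← Finset.mul_sum, ← hD]
  -- finish
  rw [hLHS, hfirst, hΩsum]
  have hFne : F x ≠ 0 := ne_of_gt (hFpos x)
  field_simp
  ring

end
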